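/- If Γ is a finite simplicial graph in the pincushion class 𝒢^(∞) and v₀ is a pin of Γ, then the induced subgraph of Γ on the vertex set VΓ \ {v₀} (equivalently, the graph with vertices VΓ \ {v₀} and edges EΓ \ {(v₀,v₁)}, where v₁ is the unique neighbor of v₀) again belongs to 𝒢^(∞). -/

import Mathlib

namespace PincushionPaper

/-- Disjoint union of two simplicial graphs. -/
def disjUnion {V W : Type} (G : SimpleGraph V) (H : SimpleGraph W) :
    SimpleGraph (V ⊕ W) where
  Adj x y :=
    match x, y with
    | Sum.inl a, Sum.inl b => G.Adj a b
    | Sum.inr a, Sum.inr b => H.Adj a b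
    | _, _ => False
  symm := ⟨by
    rintro (a | a) (b | b) h
    · exact G.adj_symm h
    · exact h.elim
    · exact h.elim
    · exact H.adj_symm h⟩
  loopless := ⟨by
    rintro (a | a) h
    · exact G.irrefl h
    · exact H.irrefl h⟩

/-- The pinning `Φ_{(G,v)}(H)` of `H` to `G` at the vertex `v` of `G`:
vertex set `V ⊔ W`, edges those of `G` and `H` together with an edge
from every vertex of `H` to `v`. -/
def pinning {V W : Type} (G : SimpleGraph V) (v : V) (H : SimpleGraph W) :
    SimpleGraph (V ⊕ W) where
  Adj x y :=
    match x, y with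
    | Sum.inl a, Sum.inl b => G.Adj a b
    | Sum.inr a, Sum.inr b => H.Adj a b
    | Sum.inl a, Sum.inr _ => a = v
    | Sum.inr _, Sum.inl b => b = v
  symm := ⟨by
    rintro (a | a) (b | b) h
    · exact G.adj_symm h
    · exact h
    · exact h
    · exact H.adj_symm h⟩
  loopless := ⟨by
    rintro (a | a) h
    · exact G.irrefl h
    · exact H.irrefl h⟩

/-- Graphs obtained from the empty graph by repeatedly appending a graph
satisfying `P`, each appended graph being either placed as a disjoint union
with the graph built so far, or pinned to the graph built so far at one of
its vertices; the resulting class is closed under graph isomorphism. -/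
inductive BuiltFrom (P : ∀ V : Type, SimpleGraph V → Prop) :
    ∀ V : Type, SimpleGraph V → Prop
  | empty : BuiltFrom P Empty ⊥
  | disj {V W : Type} {G : SimpleGraph V} {H : SimpleGraph W} :
      BuiltFrom P V G → P W H → BuiltFrom P (V ⊕ W) (disjUnion G H)
  | pin {V W : Type} {G : SimpleGraph V} {H : SimpleGraph W} (v : V) :
      BuiltFrom P V G → P W H → BuiltFrom P (V ⊕ W) (pinning G v H)
  | iso {V W : Type} {G : SimpleGraph V} {H : SimpleGraph W} :
      BuiltFrom P V G → (G ≃g H) → BuiltFrom P W H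

/-- The classes `𝒢^(m)`: `𝒢^(0)` consists of the one-vertex graph only
(up to isomorphism), and `𝒢^(m+1)` consists of the graphs built from
graphs in `𝒢^(m)` by disjoint unions and pinnings. -/
def GClass : ℕ → ∀ V : Type, SimpleGraph V → Prop
  | 0 => fun _ G => Nonempty (G ≃g (⊥ : SimpleGraph Unit))
  | m + 1 => BuiltFrom (GClass m)

/-- The pincushion class `𝒢^(∞) = ⋃ₘ 𝒢^(m)`. -/
def Pincushion (V : Type) (G : SimpleGraph V) : Prop := ∃ m, GClass m V G

/-- A pin of a graph: a vertex adjacent to exactly one other vertex. -/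
def IsPin {V : Type} (G : SimpleGraph V) (v : V) : Prop := ∃! w, G.Adj v w

end PincushionPaper

open PincushionPaper


/-!
Removing a pin is a special case of the fact that `𝒢^(∞)` is closed under taking induced
subgraphs. Restricting a disjoint union to a vertex set gives the disjoint union of the
restrictions, and restricting a pinning `Φ_{(Γ,v)}(Γ')` gives the pinning of the restrictions
if `v` survives and their disjoint union otherwise; so induction along the construction of
the graph (and on the level `m`) goes through.
-/

namespace PincushionPaper

theorem GClass.of_iso : ∀ {m : ℕ} {V W : Type} {G : SimpleGraph V} {H : SimpleGraph W},
    GClass m V G → (G ≃g H) → GClass m W H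
  | 0, _, _, _, _, ⟨e⟩, f => ⟨f.symm.trans e⟩
  | _ + 1, _, _, _, _, h, f => .iso h f

theorem Pincushion.of_iso {V W : Type} {G : SimpleGraph V} {H : SimpleGraph W}
    (hG : Pincushion V G) (e : G ≃g H) : Pincushion W H :=
  hG.imp fun _ hm => hm.of_iso e

theorem BuiltFrom.mono {P Q : ∀ V : Type, SimpleGraph V → Prop}
    (hPQ : ∀ V G, P V G → Q V G) {V : Type} {G : SimpleGraph V}
    (h : BuiltFrom P V G) : BuiltFrom Q V G := by
  induction h with
  | empty => exact .empty
  | disj _ hH ih => exact .disj ih (hPQ _ _ hH)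
  | pin v _ hH ih => exact .pin v ih (hPQ _ _ hH)
  | iso _ e ih => exact .iso ih e

def emptyDisjUnionIso {W : Type} (H : SimpleGraph W) :
    disjUnion (⊥ : SimpleGraph Empty) H ≃g H where
  toEquiv := Equiv.emptySum Empty W
  map_rel_iff' := by
    rintro (a | a) (b | b)
    all_goals first | exact a.elim | exact b.elim | exact Iff.rfl

theorem BuiltFrom.of_mem {P : ∀ V : Type, SimpleGraph V → Prop} {V : Type}
    {G : SimpleGraph V} (h : P V G) : BuiltFrom P V G :=
  .iso (.disj .empty h) (emptyDisjUnionIso G)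

theorem GClass.succ : ∀ {m : ℕ} {V : Type} {G : SimpleGraph V},
    GClass m V G → GClass (m + 1) V G
  | 0, _, _, h => BuiltFrom.of_mem h
  | _ + 1, _, _, h => BuiltFrom.mono (fun _ _ => GClass.succ) h

theorem GClass.mono {m n : ℕ} (hmn : m ≤ n) {V : Type} {G : SimpleGraph V}
    (h : GClass m V G) : GClass n V G := by
  induction hmn with
  | refl => exact h
  | step _ ih => exact ih.succ

theorem Pincushion.disjUnion {V W : Type} {G : SimpleGraph V} {H : SimpleGraph W}
    (hG : Pincushion V G) (hH : Pincushion W H) :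
    Pincushion (V ⊕ W) (disjUnion G H) := by
  obtain ⟨j, hj⟩ := hG
  obtain ⟨k, hk⟩ := hH
  exact ⟨max j k + 1,
    .disj (.of_mem (hj.mono (le_max_left j k))) (hk.mono (le_max_right j k))⟩

theorem Pincushion.pinning {V W : Type} {G : SimpleGraph V} {H : SimpleGraph W}
    (hG : Pincushion V G) (v : V) (hH : Pincushion W H) :
    Pincushion (V ⊕ W) (pinning G v H) := by
  obtain ⟨j, hj⟩ := hG
  obtain ⟨k, hk⟩ := hH
  exact ⟨max j k + 1,
    .pin v (.of_mem (hj.mono (le_max_left j k))) (hk.mono (le_max_right j k))⟩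

theorem pincushion_of_subsingleton {V : Type} [Subsingleton V] (G : SimpleGraph V) :
    Pincushion V G := by
  rcases isEmpty_or_nonempty V with _ | _
  · exact ⟨1, .iso .empty ⟨Equiv.equivOfIsEmpty Empty V, fun {a} => isEmptyElim a⟩⟩
  · refine ⟨0, ⟨⟨Equiv.punitOfNonemptyOfSubsingleton, fun {a b} => ?_⟩⟩⟩
    cases Subsingleton.elim a b
    exact iff_of_false id G.irrefl

section induce

variable {V W : Type} (A : SimpleGraph V) (H : SimpleGraph W) (s : Set (V ⊕ W))

def induceDisjUnionIso :
    (disjUnion A H).induce s ≃g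
      disjUnion (A.induce (Sum.inl ⁻¹' s)) (H.induce (Sum.inr ⁻¹' s)) where
  toEquiv := Equiv.subtypeSum
  map_rel_iff' := by rintro ⟨a | a, ha⟩ ⟨b | b, hb⟩ <;> exact Iff.rfl

def inducePinningIsoOfMem {v : V} (hv : Sum.inl v ∈ s) :
    (pinning A v H).induce s ≃g
      pinning (A.induce (Sum.inl ⁻¹' s)) ⟨v, hv⟩ (H.induce (Sum.inr ⁻¹' s)) where
  toEquiv := Equiv.subtypeSum
  map_rel_iff' := by
    rintro ⟨a | a, ha⟩ ⟨b | b, hb⟩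
    all_goals first | exact Iff.rfl | exact Subtype.ext_iff

def inducePinningIsoOfNotMem {v : V} (hv : Sum.inl v ∉ s) :
    (pinning A v H).induce s ≃g
      disjUnion (A.induce (Sum.inl ⁻¹' s)) (H.induce (Sum.inr ⁻¹' s)) where
  toEquiv := Equiv.subtypeSum
  map_rel_iff' := by
    rintro ⟨a | a, ha⟩ ⟨b | b, hb⟩
    · exact Iff.rfl
    · exact iff_of_false id fun h => hv (h ▸ ha)
    · exact iff_of_false id fun h => hv (h ▸ hb)
    · exact Iff.rfl

end induce

theorem GClass.pincushion_induce : ∀ {m : ℕ} {V : Type} {G : SimpleGraph V},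
    GClass m V G → ∀ s : Set V, Pincushion s (G.induce s)
  | 0, _, _, ⟨e⟩ => fun _ =>
    haveI := e.toEquiv.subsingleton
    pincushion_of_subsingleton _
  | m + 1, _, _, h => by
    induction h with
    | empty => exact fun _ => pincushion_of_subsingleton _
    | @disj _ _ A H _ hH ihA =>
      exact fun s => ((ihA _).disjUnion (pincushion_induce hH _)).of_iso
        (induceDisjUnionIso A H s).symm
    | @pin _ _ A H v _ hH ihA =>
      intro s
      by_cases hv : Sum.inl v ∈ s
      · exact ((ihA _).pinning ⟨v, hv⟩ (pincushion_induce hH _)).of_iso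
          (inducePinningIsoOfMem A H s hv).symm
      · exact ((ihA _).disjUnion (pincushion_induce hH _)).of_iso
          (inducePinningIsoOfNotMem A H s hv).symm
    | iso _ e ihA => exact fun _ => (ihA _).of_iso (e.induce e.bijective.bijOn_preimage)

theorem Pincushion.induce {V : Type} {G : SimpleGraph V} (hG : Pincushion V G)
    (s : Set V) : Pincushion s (G.induce s) :=
  hG.elim fun _ hm => hm.pincushion_induce s

end PincushionPaper

theorem pincushion_remove_pin_general {V : Type} (G : SimpleGraph V)
    (hG : Pincushion V G) (v₀ : V) :
    Pincushion {v : V | v ≠ v₀} (G.induce {v : V | v ≠ v₀}) :=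
  hG.induce _

/-- If `G ∈ 𝒢^(∞)` and `v₀` is a pin of `G`, then the induced subgraph of
`G` on `V \ {v₀}` again belongs to `𝒢^(∞)`. -/
theorem pincushion_remove_pin {V : Type} [Fintype V] (G : SimpleGraph V)
    (hG : Pincushion V G) (v₀ : V) (hv₀ : IsPin G v₀) :
    Pincushion {v : V | v ≠ v₀} (G.induce {v : V | v ≠ v₀}) :=
  pincushion_remove_pin_general G hG v₀
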